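/- Necessity direction of the binary margin classifier threshold (Corollary 3.6): let l : ℝ → ℝ be differentiable and suppose a ∈ ℝ satisfies t·l'(t) ≥ a for all t ∈ ℝ. Let w ∈ ℝ^d, let μ be a finitely supported probability measure on ℝ^d, set c := ⟨w, g(μ)⟩ where g(ν) := E_{x∼ν}[l'(⟨w,x⟩)·x], and let λ ∈ [0,1] satisfy (1−λ)·c + λ·a > 0 (equivalently, c > 0 and λ < c/(c − a) when a ≤ 0 < c). Then for every finitely supported probability measure ν on ℝ^d, (1−λ)·g(μ) + λ·g(ν) ≠ 0. -/
import Mathlib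


open scoped RealInnerProductSpace BigOperators

/-- A finitely supported probability measure, represented as a finitely supported
weight function which is nonnegative and sums to 1. -/
def IsFinProb {Z : Type*} (p : Z →₀ ℝ) : Prop :=
  (∀ z, 0 ≤ p z) ∧ p.sum (fun _ w => w) = 1

/-- Expectation `E_{z ∼ p}[g z]` of a vector-valued map under a finitely supported measure. -/
noncomputable def expect {Z E : Type*} [AddCommMonoid E] [Module ℝ E]
    (p : Z →₀ ℝ) (g : Z → E) : E :=
  p.sum fun z w => w • g z

/-- Pointwise gradient `l'(⟨w,x⟩)·x` of the binary margin loss `ℓ(x; w) = l(⟨w,x⟩)`. -/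
noncomputable def gmargin {d : ℕ} (l' : ℝ → ℝ) (w x : EuclideanSpace ℝ (Fin d)) :
    EuclideanSpace ℝ (Fin d) :=
  l' ⟪w, x⟫ • x

/-- necessity direction of the binary margin classifier threshold
(Corollary 3.6). If `t·l'(t) ≥ a` for all `t` and `(1−λ)·c + λ·a > 0` where
`c = ⟨w, g(μ)⟩`, then no finitely supported probability measure ν can cancel the
mixed gradient. -/
theorem stmt18 {d : ℕ} (l : ℝ → ℝ) (l' : ℝ → ℝ)
    (hl : ∀ t : ℝ, HasDerivAt l (l' t) t)
    (a : ℝ) (ha : ∀ t : ℝ, a ≤ t * l' t)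
    (w : EuclideanSpace ℝ (Fin d))
    (μ : EuclideanSpace ℝ (Fin d) →₀ ℝ) (hμ : IsFinProb μ)
    (lam : ℝ) (h0 : 0 ≤ lam) (h1 : lam ≤ 1)
    (hpos : 0 < (1 - lam) * ⟪w, expect μ (gmargin l' w)⟫ + lam * a) :
    ∀ ν : EuclideanSpace ℝ (Fin d) →₀ ℝ, IsFinProb ν →
      (1 - lam) • expect μ (gmargin l' w) + lam • expect ν (gmargin l' w) ≠ 0 := by
  intro ν hν h
  have key : a ≤ ⟪w, expect ν (gmargin l' w)⟫ := by
    have : ⟪w, expect ν (gmargin l' w)⟫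
        = ν.sum fun x p => p * (⟪w, x⟫ * l' ⟪w, x⟫) := by
      rw [expect, Finsupp.sum, Finsupp.sum, inner_sum]
      refine Finset.sum_congr rfl fun x _ => ?_
      rw [real_inner_smul_right, gmargin, real_inner_smul_right]
      ring
    rw [this, Finsupp.sum]
    calc a = ∑ x ∈ ν.support, ν x * a := by
              rw [← Finset.sum_mul]
              have : ∑ x ∈ ν.support, ν x = 1 := hν.2
              rw [this, one_mul]
      _ ≤ _ := Finset.sum_le_sum fun x _ =>
          mul_le_mul_of_nonneg_left (ha _) (hν.1 x)
  have h' : (1 - lam) * ⟪w, expect μ (gmargin l' w)⟫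
      + lam * ⟪w, expect ν (gmargin l' w)⟫ = 0 := by
    have := congrArg (fun v => ⟪w, v⟫) h
    simpa only [inner_add_right, real_inner_smul_right, inner_zero_right] using this
  have hle : lam * a ≤ lam * ⟪w, expect ν (gmargin l' w)⟫ :=
    mul_le_mul_of_nonneg_left key h0
  linarith
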